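/- (Minimal ruled graphs are graphs of harmonic functions) Under the ruled hypothesis Q = −uP, u_y + u·u_x = 0, the graph of f is a minimal surface of H₃ (H ≡ 0 on D) if and only if f is harmonic, i.e. f_xx + f_yy = 0 on D. -/

import Mathlib

noncomputable section

/-- Partial derivative with respect to the first (x) variable. -/
def pdx (f : ℝ × ℝ → ℝ) : ℝ × ℝ → ℝ := fun p => fderiv ℝ f p (1, 0)

/-- Partial derivative with respect to the second (y) variable. -/
def pdy (f : ℝ × ℝ → ℝ) : ℝ × ℝ → ℝ := fun p => fderiv ℝ f p (0, 1)

/-- `P = f_x + y/2`. -/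
def Pf (f : ℝ × ℝ → ℝ) : ℝ × ℝ → ℝ := fun p => pdx f p + p.2 / 2

/-- `Q = f_y - x/2`. -/
def Qf (f : ℝ × ℝ → ℝ) : ℝ × ℝ → ℝ := fun p => pdy f p - p.1 / 2

/-- First fundamental form coefficient `E = 1 + P²`. -/
def Ef (f : ℝ × ℝ → ℝ) : ℝ × ℝ → ℝ := fun p => 1 + Pf f p ^ 2

/-- First fundamental form coefficient `F = P·Q`. -/
def Ff (f : ℝ × ℝ → ℝ) : ℝ × ℝ → ℝ := fun p => Pf f p * Qf f p

/-- First fundamental form coefficient `G = 1 + Q²`. -/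
def Gf (f : ℝ × ℝ → ℝ) : ℝ × ℝ → ℝ := fun p => 1 + Qf f p ^ 2

/-- `W = √(EG − F²) = √(1 + P² + Q²)`. -/
def Wf (f : ℝ × ℝ → ℝ) : ℝ × ℝ → ℝ := fun p => Real.sqrt (1 + Pf f p ^ 2 + Qf f p ^ 2)

/-- Second fundamental form coefficient `L = (f_xx + PQ)/W`. -/
def Lf (f : ℝ × ℝ → ℝ) : ℝ × ℝ → ℝ := fun p => (pdx (pdx f) p + Pf f p * Qf f p) / Wf f p

/-- Second fundamental form coefficient `M = (f_xy + (Q² − P²)/2)/W`. -/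
def Mf (f : ℝ × ℝ → ℝ) : ℝ × ℝ → ℝ :=
  fun p => (pdx (pdy f) p + (Qf f p ^ 2 - Pf f p ^ 2) / 2) / Wf f p

/-- Second fundamental form coefficient `N = (f_yy − PQ)/W`. -/
def Nf (f : ℝ × ℝ → ℝ) : ℝ × ℝ → ℝ := fun p => (pdy (pdy f) p - Pf f p * Qf f p) / Wf f p

/-- Mean curvature `H = (EN − 2FM + GL)/(2W²)`. -/
def Hf (f : ℝ × ℝ → ℝ) : ℝ × ℝ → ℝ :=
  fun p => (Ef f p * Nf f p - 2 * Ff f p * Mf f p + Gf f p * Lf f p) / (2 * Wf f p ^ 2)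

/-- The Laplace–Beltrami operator of the graph of `f`, with the sign convention
`Δφ = −(1/W)[∂_x((G φ_x − F φ_y)/W) + ∂_y((−F φ_x + E φ_y)/W)]`. -/
def lapS (f φ : ℝ × ℝ → ℝ) : ℝ × ℝ → ℝ := fun p =>
  -(1 / Wf f p) *
    (pdx (fun q => (Gf f q * pdx φ q - Ff f q * pdy φ q) / Wf f q) p +
     pdy (fun q => (-(Ff f q) * pdx φ q + Ef f q * pdy φ q) / Wf f q) p)

/-- Mean curvature in the form `H = (f_xx + f_yy)/(2W³)`. -/
def Hm (f : ℝ × ℝ → ℝ) : ℝ × ℝ → ℝ :=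
  fun p => (pdx (pdx f) p + pdy (pdy f) p) / (2 * Wf f p ^ 3)

/-- `H₁ = (f_xx + f_yy)/W`. -/
def H1f (f : ℝ × ℝ → ℝ) : ℝ × ℝ → ℝ :=
  fun p => (pdx (pdx f) p + pdy (pdy f) p) / Wf f p

/-!
The rulings are horizontal, so their direction in the parameter plane is `(Q, -P)`
(`ω (a r_x + b r_y) = a P + b Q`), and being geodesics of `H₃` they are asymptotic lines:
`Q² L - 2 P Q M + P² N = 0`. Analytically, this is what differentiating `Q = -u P` and using
`u_y + u u_x = 0` gives. Expanding `E, F, G` in `2 W² H = E N - 2 F M + G L` then leaves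
`L + N = (f_xx + f_yy) / W` plus that vanishing term; as `W > 0`, `H = 0` exactly where `f`
is harmonic.
-/

open Filter Topology

lemma pdy_pdx_eq_pdx_pdy {f : ℝ × ℝ → ℝ} {p : ℝ × ℝ} (hf : ContDiffAt ℝ 2 f p) :
    pdy (pdx f) p = pdx (pdy f) p := by
  have hd : DifferentiableAt ℝ (fderiv ℝ f) p :=
    (hf.fderiv_right (m := 1) (by norm_num)).differentiableAt (by norm_num)
  change fderiv ℝ (fun q => fderiv ℝ f q (1, 0)) p (0, 1)
    = fderiv ℝ (fun q => fderiv ℝ f q (0, 1)) p (1, 0)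
  rw [fderiv_clm_apply hd (differentiableAt_const _),
    fderiv_clm_apply hd (differentiableAt_const _)]
  simpa using
    (hf.isSymmSndFDerivAt (by simp [minSmoothness_of_isRCLikeNormedField])).eq (0, 1) (1, 0)

lemma differentiableAt_fderiv_apply {f : ℝ × ℝ → ℝ} {p : ℝ × ℝ} (hf : ContDiffAt ℝ 2 f p)
    (v : ℝ × ℝ) : DifferentiableAt ℝ (fun q => fderiv ℝ f q v) p :=
  ((hf.fderiv_right (m := 1) (by norm_num)).clm_apply contDiffAt_const).differentiableAt
    (by norm_num)

lemma fderiv_half_apply {E : Type*} [NormedAddCommGroup E] [NormedSpace ℝ E] (l : E →L[ℝ] ℝ)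
    (p v : E) :
    fderiv ℝ (fun q => l q / 2) p v = l v / 2 := by
  simp only [div_eq_mul_inv]
  rw [fderiv_mul_const l.differentiableAt, ContinuousLinearMap.fderiv]
  simp [mul_comm]

lemma fderiv_Pf {f : ℝ × ℝ → ℝ} {p : ℝ × ℝ} (hf : DifferentiableAt ℝ (pdx f) p) (v : ℝ × ℝ) :
    fderiv ℝ (Pf f) p v = fderiv ℝ (pdx f) p v + v.2 / 2 := by
  change fderiv ℝ (fun q => pdx f q + q.2 / 2) p v = _
  rw [fderiv_fun_add hf (by fun_prop), add_apply]
  exact congrArg _ (fderiv_half_apply (.snd ℝ ℝ ℝ) p v)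

lemma fderiv_Qf {f : ℝ × ℝ → ℝ} {p : ℝ × ℝ} (hf : DifferentiableAt ℝ (pdy f) p) (v : ℝ × ℝ) :
    fderiv ℝ (Qf f) p v = fderiv ℝ (pdy f) p v - v.1 / 2 := by
  change fderiv ℝ (fun q => pdy f q - q.1 / 2) p v = _
  rw [fderiv_fun_sub hf (by fun_prop), sub_apply]
  exact congrArg _ (fderiv_half_apply (.fst ℝ ℝ ℝ) p v)

lemma fderiv_eq_of_eventuallyEq_neg_mul {E : Type*} [NormedAddCommGroup E] [NormedSpace ℝ E]
    {g u h : E → ℝ} {p : E} (hg : g =ᶠ[𝓝 p] fun q => -(u q) * h q)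
    (hu : DifferentiableAt ℝ u p) (hh : DifferentiableAt ℝ h p) (v : E) :
    fderiv ℝ g p v = -(fderiv ℝ u p v) * h p - u p * fderiv ℝ h p v := by
  rw [hg.fderiv_eq, fderiv_fun_mul (c := fun q => -u q) hu.neg hh, fderiv_fun_neg]
  simp only [add_apply, smul_apply, neg_apply, smul_eq_mul]
  ring

lemma pdx_Pf {f : ℝ × ℝ → ℝ} {p : ℝ × ℝ} (hf : DifferentiableAt ℝ (pdx f) p) :
    pdx (Pf f) p = pdx (pdx f) p := by
  simp [pdx, fderiv_Pf hf]

lemma pdy_Pf {f : ℝ × ℝ → ℝ} {p : ℝ × ℝ} (hf : ContDiffAt ℝ 2 f p) :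
    pdy (Pf f) p = pdx (pdy f) p + 1 / 2 := by
  rw [← pdy_pdx_eq_pdx_pdy hf]
  simp [pdy, fderiv_Pf (differentiableAt_fderiv_apply hf _)]

lemma pdx_Qf {f : ℝ × ℝ → ℝ} {p : ℝ × ℝ} (hf : DifferentiableAt ℝ (pdy f) p) :
    pdx (Qf f) p = pdx (pdy f) p - 1 / 2 := by
  simp [pdx, fderiv_Qf hf]

lemma pdy_Qf {f : ℝ × ℝ → ℝ} {p : ℝ × ℝ} (hf : DifferentiableAt ℝ (pdy f) p) :
    pdy (Qf f) p = pdy (pdy f) p := by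
  simp [pdy, fderiv_Qf hf]

lemma Wf_pos (f : ℝ × ℝ → ℝ) (p : ℝ × ℝ) : 0 < Wf f p := by
  unfold Wf; positivity

lemma H1f_eq_zero_iff {f : ℝ × ℝ → ℝ} {p : ℝ × ℝ} :
    H1f f p = 0 ↔ pdx (pdx f) p + pdy (pdy f) p = 0 := by
  simp [H1f, (Wf_pos f p).ne']

lemma Hf_eq_H1f_add (f : ℝ × ℝ → ℝ) (p : ℝ × ℝ) :
    Hf f p = (H1f f p + (Qf f p ^ 2 * Lf f p - 2 * Pf f p * Qf f p * Mf f p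
      + Pf f p ^ 2 * Nf f p)) / (2 * Wf f p ^ 2) := by
  simp only [Hf, H1f, Ef, Ff, Gf, Lf, Mf, Nf]
  ring

lemma ruling_second_form_eq_zero {f u : ℝ × ℝ → ℝ} {p : ℝ × ℝ} (hf : ContDiffAt ℝ 2 f p)
    (hu : DifferentiableAt ℝ u p) (hruled : Qf f =ᶠ[𝓝 p] fun q => -(u q) * Pf f q)
    (hburgers : pdy u p + u p * pdx u p = 0) :
    Qf f p ^ 2 * Lf f p - 2 * Pf f p * Qf f p * Mf f p + Pf f p ^ 2 * Nf f p = 0 := by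
  have hfx := differentiableAt_fderiv_apply hf (1, 0)
  have hfy := differentiableAt_fderiv_apply hf (0, 1)
  have hP : DifferentiableAt ℝ (Pf f) p := hfx.add (by fun_prop)
  have hx : pdx (Qf f) p = -(pdx u p) * Pf f p - u p * pdx (Pf f) p :=
    fderiv_eq_of_eventuallyEq_neg_mul hruled hu hP (1, 0)
  have hy : pdy (Qf f) p = -(pdy u p) * Pf f p - u p * pdy (Pf f) p :=
    fderiv_eq_of_eventuallyEq_neg_mul hruled hu hP (0, 1)
  rw [pdx_Qf hfy, pdx_Pf hfx] at hx
  rw [pdy_Qf hfy, pdy_Pf hf] at hy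
  have hQ : Qf f p = -(u p) * Pf f p := hruled.self_of_nhds
  set P := Pf f p
  set Q := Qf f p
  set U := u p
  have hK : Q ^ 2 * pdx (pdx f) p - 2 * P * Q * pdx (pdy f) p + P ^ 2 * pdy (pdy f) p = 0 := by
    linear_combination (pdx (pdx f) p * (Q - U * P) - 2 * P * pdx (pdy f) p) * hQ
      + P ^ 2 * U * hx + P ^ 2 * hy - P ^ 3 * hburgers
  simp only [Lf, Mf, Nf]
  rw [← zero_div (Wf f p), ← hK]
  ring

lemma Hf_eq_zero_iff_of_ruled {f u : ℝ × ℝ → ℝ} {p : ℝ × ℝ} (hf : ContDiffAt ℝ 2 f p)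
    (hu : DifferentiableAt ℝ u p) (hruled : Qf f =ᶠ[𝓝 p] fun q => -(u q) * Pf f q)
    (hburgers : pdy u p + u p * pdx u p = 0) :
    Hf f p = 0 ↔ pdx (pdx f) p + pdy (pdy f) p = 0 := by
  rw [Hf_eq_H1f_add, ruling_second_form_eq_zero hf hu hruled hburgers, add_zero,
    div_eq_zero_iff, H1f_eq_zero_iff]
  simp [(Wf_pos f p).ne']

theorem minimal_ruled_graph_iff_harmonic_general
    (D : Set (ℝ × ℝ)) (hD : IsOpen D)
    (f : ℝ × ℝ → ℝ) (hf : ContDiffOn ℝ (⊤ : ℕ∞) f D)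
    (u : ℝ × ℝ → ℝ) (hu : ContDiffOn ℝ (⊤ : ℕ∞) u D)
    (hruled : ∀ p ∈ D, Qf f p = -(u p) * Pf f p)
    (hburgers : ∀ p ∈ D, pdy u p + u p * pdx u p = 0) :
    (∀ p ∈ D, Hf f p = 0) ↔ (∀ p ∈ D, pdx (pdx f) p + pdy (pdy f) p = 0) := by
  refine forall₂_congr fun p hp => Hf_eq_zero_iff_of_ruled ?_ ?_ ?_ (hburgers p hp)
  · exact (hf.contDiffAt (hD.mem_nhds hp)).of_le (WithTop.coe_le_coe.2 le_top)
  · exact (hu.contDiffAt (hD.mem_nhds hp)).differentiableAt (by simp)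
  · exact eventually_of_mem (hD.mem_nhds hp) hruled

/-- **Minimal ruled graphs are graphs of harmonic functions**: under the ruled hypothesis
`Q = −uP`, `u_y + u·u_x = 0`, the graph of `f` is a minimal surface of `H₃` (`H ≡ 0` on `D`)
if and only if `f` is harmonic, i.e. `f_xx + f_yy = 0` on `D`. -/
theorem minimal_ruled_graph_iff_harmonic
    (D : Set (ℝ × ℝ)) (hD : IsOpen D) (hDne : D.Nonempty)
    (f : ℝ × ℝ → ℝ) (hf : ContDiffOn ℝ (⊤ : ℕ∞) f D)
    (u : ℝ × ℝ → ℝ) (hu : ContDiffOn ℝ (⊤ : ℕ∞) u D)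
    (hruled : ∀ p ∈ D, Qf f p = -(u p) * Pf f p)
    (hburgers : ∀ p ∈ D, pdy u p + u p * pdx u p = 0) :
    (∀ p ∈ D, Hf f p = 0) ↔ (∀ p ∈ D, pdx (pdx f) p + pdy (pdy f) p = 0) :=
  minimal_ruled_graph_iff_harmonic_general D hD f hf u hu hruled hburgers
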